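/- arXiv:2002.06690 — 3 statements merged into one kernel-verified Lean document; each statement's English description precedes it below -/
import Mathlib

section
/- Let G be a connected bipartite cubic graph with parts of size n ≥ 7 and girth at least 6. Then the dimension of the binary code whose parity-check matrix is the biadjacency matrix H of G is at most 5n/6. -/
/-!
Over `𝔽₂` the Gram matrix of the columns of `H` is `HᵀH = 3I + T = I + A`, where `A` is the
adjacency matrix of the bit graph `Γ` (two bits are adjacent when they share a check): girth at
least 6 means that two bits share at most one check. Hence the columns indexed by an independent
set of `Γ` are orthonormal, so linearly independent. The graph `Γ` is connected with degrees at
most 6, so growing an independent set greedily along `Γ` yields one, `S`, with `n ≤ 6|S| + 1`;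
take `S` of maximum size. If some bit outside `S` has a unique `Γ`-neighbour `a` in `S`, its
column can only lie in the span of the columns of `S` by being equal to the column of `a`, which
is impossible, so `rank H ≥ |S| + 1 ≥ n / 6`. Otherwise every bit outside `S` has at least two
neighbours in `S`, and double counting gives `2(n - |S|) ≤ 6|S|`, so `rank H ≥ |S| ≥ n / 4`.
Either way `dim C = n - rank H ≤ 5n / 6`.
-/

open Finset Sum Matrix

section LinearAlgebra

variable {ι m K : Type*} [DecidableEq ι] [Fintype m] [Field K]

theorem sum_smul_dotProduct_of_orthonormalOn {v : ι → m → K} {s : Finset ι}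
    (hs : ∀ i ∈ s, ∀ j ∈ s, v i ⬝ᵥ v j = if i = j then 1 else 0) (c : ι → K) {j : ι}
    (hj : j ∈ s) : (∑ i ∈ s, c i • v i) ⬝ᵥ v j = c j := by
  simp_rw [sum_dotProduct, smul_dotProduct, smul_eq_mul]
  rw [sum_eq_single_of_mem j hj fun i hi hij => by simp [hs i hi j hj, hij]]
  simp [hs j hj j hj]

theorem linearIndepOn_of_orthonormalOn {v : ι → m → K} {s : Finset ι}
    (hs : ∀ i ∈ s, ∀ j ∈ s, v i ⬝ᵥ v j = if i = j then 1 else 0) :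
    LinearIndepOn K v (s : Set ι) := by
  rw [linearIndepOn_finset_iff]
  intro c hc j hj
  rw [← sum_smul_dotProduct_of_orthonormalOn hs c hj, hc, zero_dotProduct]

theorem linearIndepOn_insert_of_orthonormalOn {v : ι → m → K} {s : Finset ι}
    (hs : ∀ i ∈ s, ∀ j ∈ s, v i ⬝ᵥ v j = if i = j then 1 else 0) {a b : ι} (ha : a ∈ s)
    (hb : b ∉ s) (hba : ∀ j ∈ s, v b ⬝ᵥ v j = if a = j then 1 else 0) (hne : v b ≠ v a) :
    LinearIndepOn K v (insert b (s : Set ι)) := by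
  refine (linearIndepOn_insert (by exact_mod_cast hb)).2 ⟨linearIndepOn_of_orthonormalOn hs, ?_⟩
  rw [Submodule.mem_span_image_finset_iff_exists_fun']
  rintro ⟨c, hc⟩
  have hcoef : ∀ j ∈ s, c j = if a = j then 1 else 0 := fun j hj => by
    rw [← hba j hj, ← hc, sum_smul_dotProduct_of_orthonormalOn hs c hj]
  apply hne
  rw [← hc, sum_congr rfl fun j hj => by rw [hcoef j hj]]
  simp [ha]

theorem Matrix.card_le_rank_of_linearIndepOn_col {n : Type*} [Fintype n] (A : Matrix m n K)
    {s : Finset n} (hs : LinearIndepOn K A.col (s : Set n)) : #s ≤ A.rank := by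
  rw [rank_eq_finrank_span_cols, ← Fintype.card_coe]
  exact (finrank_span_eq_card hs).symm.trans_le <|
    Submodule.finrank_mono (Submodule.span_mono (Set.range_comp_subset_range _ _))

end LinearAlgebra

theorem Matrix.rank_add_finrank_ker {m n K : Type*} [Fintype n] [Field K] (A : Matrix m n K) :
    A.rank + Module.finrank K (LinearMap.ker A.mulVecLin) = Fintype.card n := by
  rw [Matrix.rank, LinearMap.finrank_range_add_finrank_ker, Module.finrank_fintype_fun_eq_card]

namespace SimpleGraph

section

variable {V : Type*} {G : SimpleGraph V}

theorem Connected.exists_adj_of_mem_of_notMem (hG : G.Connected) {t : Set V} {x y : V}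
    (hx : x ∈ t) (hy : y ∉ t) : ∃ u ∈ t, ∃ v ∉ t, G.Adj u v := by
  obtain ⟨⟨⟨u, v⟩, huv⟩, -, hu, hv⟩ := (hG.preconnected x y).some.exists_boundary_dart t hx hy
  exact ⟨u, hu, v, hv, huv⟩

theorem eq_of_adj_of_adj_of_four_lt_egirth (hG : 4 < G.egirth) {u v x y : V} (huv : u ≠ v)
    (hux : G.Adj u x) (hvx : G.Adj v x) (huy : G.Adj u y) (hvy : G.Adj v y) : x = y := by
  by_contra hxy
  let c : G.Walk u u := .cons hux (.cons hvx.symm (.cons hvy (.cons huy.symm .nil)))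
  have hc : c.IsCycle := by
    simp [c, Walk.cons_isCycle_iff, huv, hxy, hux.ne, huy.ne, hvy.ne, Ne.symm huv, hux.ne.symm,
      hvx.ne.symm, huy.ne.symm]
  have := le_egirth.1 (Order.add_one_le_of_lt hG) _ c hc
  simp only [c, Walk.length_cons, Walk.length_nil] at this
  norm_num at this

end

section IndependentSets

variable {V : Type*} [Fintype V] [DecidableEq V] (G : SimpleGraph V) [DecidableRel G.Adj]

def closedNeighborFinset (s : Finset V) : Finset V := {v | v ∈ s ∨ ∃ u ∈ s, G.Adj u v}

variable {G}

theorem mem_closedNeighborFinset {s : Finset V} {v : V} :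
    v ∈ G.closedNeighborFinset s ↔ v ∈ s ∨ ∃ u ∈ s, G.Adj u v := by
  simp [closedNeighborFinset]

theorem closedNeighborFinset_mono {s t : Finset V} (h : s ⊆ t) :
    G.closedNeighborFinset s ⊆ G.closedNeighborFinset t := by
  intro v
  simp only [mem_closedNeighborFinset]
  exact Or.imp (@h v) fun ⟨u, hu, huv⟩ => ⟨u, h hu, huv⟩

theorem card_closedNeighborFinset_singleton_le (v : V) :
    #(G.closedNeighborFinset {v}) ≤ G.degree v + 1 := by
  rw [← card_neighborFinset_eq_degree]
  refine (card_le_card fun x => ?_).trans (card_insert_le v _)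
  simp [mem_closedNeighborFinset]

/-- The closed neighbourhood of `v` meets `N[s]` in `u`, so it adds at most `deg v` new vertices. -/
theorem card_closedNeighborFinset_insert_le {s : Finset V} {u v : V}
    (hu : u ∈ G.closedNeighborFinset s) (huv : G.Adj u v) :
    #(G.closedNeighborFinset (insert v s)) ≤ #(G.closedNeighborFinset s) + G.degree v := by
  have hsplit : G.closedNeighborFinset (insert v s) =
      G.closedNeighborFinset s ∪ G.closedNeighborFinset {v} := by
    ext x
    simp only [mem_closedNeighborFinset, mem_union, mem_insert, mem_singleton, exists_eq_or_imp,
      exists_eq_left]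
    aesop
  have hmeet : 0 < #(G.closedNeighborFinset s ∩ G.closedNeighborFinset {v}) :=
    card_pos.2 ⟨u, mem_inter.2 ⟨hu, mem_closedNeighborFinset.2 (Or.inr ⟨v, mem_singleton_self v,
      huv.symm⟩)⟩⟩
  have := card_union_add_card_inter (G.closedNeighborFinset s) (G.closedNeighborFinset {v})
  have := card_closedNeighborFinset_singleton_le (G := G) v
  rw [hsplit]
  omega

theorem IsIndepSet.insert_of_notMem_closedNeighborFinset {s : Finset V} {v : V}
    (hs : G.IsIndepSet s) (hv : v ∉ G.closedNeighborFinset s) :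
    G.IsIndepSet (insert v s : Finset V) := by
  rw [coe_insert]
  refine hs.insert fun u hu _ => ⟨fun h => hv ?_, fun h => hv ?_⟩
  · exact mem_closedNeighborFinset.2 (Or.inr ⟨u, hu, h.symm⟩)
  · exact mem_closedNeighborFinset.2 (Or.inr ⟨u, hu, h⟩)

/-- Among the independent sets `s` with `|N[s]| ≤ d|s| + 1`, one maximising `|N[s]|` has
`N[s] = V`: otherwise, by connectivity, a vertex outside `N[s]` adjacent to `N[s]` could be added. -/
theorem Connected.exists_isIndepSet_card_le {d : ℕ} (hG : G.Connected)
    (hd : ∀ v, G.degree v ≤ d) :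
    ∃ s : Finset V, G.IsIndepSet s ∧ Fintype.card V ≤ d * #s + 1 := by
  classical
  obtain ⟨v₀⟩ := hG.nonempty
  let good : Finset (Finset V) :=
    {s | G.IsIndepSet s ∧ #(G.closedNeighborFinset s) ≤ d * #s + 1}
  have hv₀ : {v₀} ∈ good := by
    simp only [good, mem_filter, mem_univ, true_and, coe_singleton, Set.pairwise_singleton,
      card_singleton, mul_one]
    exact (card_closedNeighborFinset_singleton_le v₀).trans (by linarith [hd v₀])
  obtain ⟨s, hs, hmax⟩ := exists_max_image good (fun s => #(G.closedNeighborFinset s)) ⟨_, hv₀⟩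
  simp only [good, mem_filter, mem_univ, true_and] at hs
  refine ⟨s, hs.1, ?_⟩
  suffices G.closedNeighborFinset s = univ by simpa [this] using hs.2
  by_contra hne
  obtain ⟨w, hw⟩ := not_forall.1 (eq_univ_iff_forall.not.1 hne)
  obtain ⟨x, hx⟩ : (G.closedNeighborFinset s).Nonempty := by
    have := hmax _ hv₀
    have : 0 < #(G.closedNeighborFinset {v₀}) :=
      card_pos.2 ⟨v₀, mem_closedNeighborFinset.2 (Or.inl (mem_singleton_self v₀))⟩
    exact card_pos.1 (by omega)
  obtain ⟨u, hu, v, hv, huv⟩ := hG.exists_adj_of_mem_of_notMem (t := G.closedNeighborFinset s)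
    (mem_coe.2 hx) (mt mem_coe.1 hw)
  rw [mem_coe] at hu hv
  have hvs : v ∉ s := fun h => hv (mem_closedNeighborFinset.2 (Or.inl h))
  have hgrow : G.closedNeighborFinset s ⊂ G.closedNeighborFinset (insert v s) :=
    ssubset_of_subset_of_ne (closedNeighborFinset_mono (subset_insert v s))
      fun h => hv (h ▸ mem_closedNeighborFinset.2 (Or.inl (mem_insert_self v s)))
  have hext : insert v s ∈ good := by
    simp only [good, mem_filter, mem_univ, true_and, card_insert_of_notMem hvs]
    refine ⟨hs.1.insert_of_notMem_closedNeighborFinset hv, ?_⟩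
    nlinarith [card_closedNeighborFinset_insert_le hu huv, hd v, hs.2]
  exact absurd (hmax _ hext) (not_le.2 (card_lt_card hgrow))

theorem card_compl_mul_le_card_mul_of_le_card_adj {d : ℕ} (hd : ∀ v, G.degree v ≤ d)
    {s : Finset V} {k : ℕ} (hk : ∀ b ∉ s, k ≤ #{u ∈ s | G.Adj u b}) : #sᶜ * k ≤ #s * d :=
  card_mul_le_card_mul (fun b u => G.Adj u b) (fun b hb => hk b (mem_compl.1 hb))
    fun u _ => (card_le_card fun b hb => by simpa using (mem_filter.1 hb).2).trans
      ((card_neighborFinset_eq_degree G u).trans_le (hd u))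

/-- Take `s` of maximum size; it dominates `G`. Either some vertex outside `s` has exactly one
neighbour in `s`, or all have at least two and double counting bounds `|sᶜ|`. -/
theorem Connected.exists_isIndepSet_of_degree_le {d : ℕ} (hG : G.Connected)
    (hd : ∀ v, G.degree v ≤ d) (hd2 : 2 ≤ d) :
    ∃ s : Finset V, G.IsIndepSet s ∧ (Fintype.card V ≤ d * #s ∨
      ∃ a ∈ s, ∃ b ∉ s, (∀ u ∈ s, G.Adj u b ↔ u = a) ∧ Fintype.card V ≤ d * (#s + 1)) := by
  obtain ⟨t, ht, hcard⟩ := hG.exists_isIndepSet_card_le hd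
  obtain ⟨s, hs⟩ := G.exists_isNIndepSet_indepNum
  have hts : #t ≤ #s := hs.card_eq ▸ ht.card_le_indepNum
  have hdom : ∀ b ∉ s, 1 ≤ #{u ∈ s | G.Adj u b} := by
    intro b hb
    by_contra! h0
    have hnadj : ∀ u ∈ s, ¬ G.Adj u b := filter_eq_empty_iff.1 (card_eq_zero.1 (by omega))
    have hind : G.IsIndepSet (insert b s : Finset V) :=
      hs.isIndepSet.insert_of_notMem_closedNeighborFinset fun h => by
        rcases mem_closedNeighborFinset.1 h with h | ⟨u, hu, hub⟩
        exacts [hb h, hnadj u hu hub]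
    have := hind.card_le_indepNum
    rw [card_insert_of_notMem hb, hs.card_eq] at this
    omega
  refine ⟨s, hs.isIndepSet, ?_⟩
  by_cases hunique : ∃ b ∉ s, #{u ∈ s | G.Adj u b} = 1
  · obtain ⟨b, hb, h1⟩ := hunique
    obtain ⟨a, ha⟩ := card_eq_one.1 h1
    have hmem : ∀ u ∈ s, G.Adj u b ↔ u = a := fun u hu => by
      rw [← mem_singleton, ← ha, mem_filter]
      exact ⟨fun h => ⟨hu, h⟩, And.right⟩
    refine Or.inr ⟨a, (mem_filter.1 (ha ▸ mem_singleton_self a)).1, b, hb, hmem, ?_⟩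
    nlinarith
  · push Not at hunique
    have := card_compl_mul_le_card_mul_of_le_card_adj hd (k := 2) fun b hb => by
      have := hdom b hb
      have := hunique b hb
      omega
    have := card_compl_add_card s
    left
    nlinarith

end IndependentSets

section BitGraph

variable {α β : Type*} (G : SimpleGraph (α ⊕ β))

/-- The bit node graph `Γ` of the Tanner graph `G`: bits on the left, checks on the right. -/
def bitGraph : SimpleGraph α where
  Adj u v := u ≠ v ∧ ∃ c, G.Adj (inr c) (inl u) ∧ G.Adj (inr c) (inl v)
  symm := ⟨fun _ _ ⟨hne, c, hu, hv⟩ => ⟨hne.symm, c, hv, hu⟩⟩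
  loopless := ⟨fun _ h => h.1 rfl⟩

instance [Fintype β] [DecidableEq α] [DecidableRel G.Adj] : DecidableRel G.bitGraph.Adj :=
  fun _ _ => inferInstanceAs (Decidable (_ ∧ _))

def biadjMatrix [DecidableRel G.Adj] : Matrix β α (ZMod 2) :=
  Matrix.of fun c u => if G.Adj (inr c) (inl u) then 1 else 0

variable {G}

/-- Sending each check to one of its bits turns every edge of `G` into an edge or a loop of `Γ`. -/
theorem bitGraph_connected (hG : G.Connected) (hl : ∀ a b, ¬ G.Adj (inl a) (inl b))
    (hr : ∀ a b, ¬ G.Adj (inr a) (inr b)) (hbit : ∀ c, ∃ u, G.Adj (inr c) (inl u)) :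
    G.bitGraph.Connected := by
  choose f hf using hbit
  let π : α ⊕ β → α := Sum.elim id f
  have hπ : ∀ {x y}, G.Adj x y → G.bitGraph.Reachable (π x) (π y) := by
    have hshare : ∀ c u, G.Adj (inr c) (inl u) → G.bitGraph.Reachable (f c) u := fun c u h => by
      by_cases hfu : f c = u
      · exact hfu ▸ Reachable.refl _
      · exact Adj.reachable ⟨hfu, c, hf c, h⟩
    rintro (a | c) (b | d) h
    exacts [absurd h (hl a b), (hshare d a h.symm).symm, hshare c b h, absurd h (hr c d)]
  obtain ⟨v⟩ := hG.nonempty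
  have : Nonempty α := ⟨π v⟩
  refine ⟨fun u v => ?_⟩
  have := hG.preconnected (inl u) (inl v)
  rw [reachable_iff_reflTransGen] at this ⊢
  exact this.lift' π fun x y h => (reachable_iff_reflTransGen _ _).1 (hπ h)

variable [DecidableRel G.Adj]

theorem ncard_neighborSet_inr [Fintype α] (hr : ∀ a b, ¬ G.Adj (inr a) (inr b)) (c : β) :
    (G.neighborSet (inr c)).ncard = #{u | G.Adj (inr c) (inl u)} := by
  have : G.neighborSet (inr c) = inl '' ({u | G.Adj (inr c) (inl u)} : Finset α) := by
    ext (a | b) <;> simp [hr c]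
  rw [this, Set.ncard_image_of_injective _ inl_injective, Set.ncard_coe_finset]

variable [Fintype β]

theorem ncard_neighborSet_inl (hl : ∀ a b, ¬ G.Adj (inl a) (inl b)) (u : α) :
    (G.neighborSet (inl u)).ncard = #{c | G.Adj (inr c) (inl u)} := by
  have : G.neighborSet (inl u) = inr '' ({c | G.Adj (inr c) (inl u)} : Finset β) := by
    ext (a | c) <;> simp [hl u, G.adj_comm]
  rw [this, Set.ncard_image_of_injective _ inr_injective, Set.ncard_coe_finset]

theorem card_common_le_one_of_four_lt_egirth (hG : 4 < G.egirth) {u v : α} (huv : u ≠ v) :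
    #{c | G.Adj (inr c) (inl u) ∧ G.Adj (inr c) (inl v)} ≤ 1 :=
  card_le_one.2 fun _ hc _ hc' => inr_injective <| eq_of_adj_of_adj_of_four_lt_egirth hG
    (inl_injective.ne huv) (mem_filter.1 hc).2.1.symm (mem_filter.1 hc).2.2.symm
    (mem_filter.1 hc').2.1.symm (mem_filter.1 hc').2.2.symm

variable [DecidableEq α]

theorem degree_bitGraph_le [Fintype α] {a b : ℕ}
    (hcheck : ∀ u, #{c | G.Adj (inr c) (inl u)} ≤ a)
    (hbit : ∀ c, #{u | G.Adj (inr c) (inl u)} ≤ b + 1) (u : α) :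
    G.bitGraph.degree u ≤ a * b := by
  have hsub : G.bitGraph.neighborFinset u ⊆ ({c | G.Adj (inr c) (inl u)} : Finset β).biUnion
      fun c => ({v | G.Adj (inr c) (inl v)} : Finset α).erase u := by
    intro v hv
    obtain ⟨hne, c, hu, hv⟩ := (mem_neighborFinset _ _ _).1 hv
    exact mem_biUnion.2 ⟨c, by simpa using hu, mem_erase.2 ⟨hne.symm, by simpa using hv⟩⟩
  rw [← card_neighborFinset_eq_degree]
  refine (card_le_card hsub).trans (card_biUnion_le.trans ?_)
  calc _ ≤ ∑ _c ∈ ({c | G.Adj (inr c) (inl u)} : Finset β), b :=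
        sum_le_sum fun c hc => by
          have := card_erase_of_mem (s := ({v | G.Adj (inr c) (inl v)} : Finset α))
            (by simpa using hc)
          have := hbit c
          omega
    _ ≤ a * b := by
        rw [sum_const, smul_eq_mul]
        exact Nat.mul_le_mul_right _ (hcheck u)

/-- `HᵀH = 3I + T`, where `3 = 1` in `𝔽₂` and `T = A(Γ)` because two bits share at most one
check. -/
theorem transpose_biadjMatrix_mul_self (hcheck : ∀ u, #{c | G.Adj (inr c) (inl u)} = 3)
    (hG : 4 < G.egirth) :
    (biadjMatrix G)ᵀ * biadjMatrix G = 1 + G.bitGraph.adjMatrix (ZMod 2) := by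
  ext u w
  have hcommon : ((biadjMatrix G)ᵀ * biadjMatrix G) u w =
      (#{c | G.Adj (inr c) (inl u) ∧ G.Adj (inr c) (inl w)} : ZMod 2) := by
    simp only [mul_apply, transpose_apply, biadjMatrix, of_apply, mul_ite, mul_one, mul_zero]
    rw [← sum_boole]
    congr 1
    ext c
    split_ifs <;> simp_all
  rw [hcommon, Matrix.add_apply, adjMatrix_apply, one_apply]
  by_cases huw : u = w
  · subst huw
    simp only [and_self, hcheck u, if_true, G.bitGraph.loopless.irrefl, if_false]
    decide
  · have hcount : #{c | G.Adj (inr c) (inl u) ∧ G.Adj (inr c) (inl w)} =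
        if G.bitGraph.Adj u w then 1 else 0 := by
      split_ifs with hadj
      · obtain ⟨-, c, hc⟩ := hadj
        exact le_antisymm (card_common_le_one_of_four_lt_egirth hG huw)
          (card_pos.2 ⟨c, mem_filter.2 ⟨mem_univ c, hc⟩⟩)
      · exact card_eq_zero.2 (filter_eq_empty_iff.2 fun c _ hc => hadj ⟨huw, c, hc⟩)
    rw [hcount, if_neg huw, zero_add]
    split_ifs <;> simp

theorem col_dotProduct_col_biadjMatrix (hcheck : ∀ u, #{c | G.Adj (inr c) (inl u)} = 3)
    (hG : 4 < G.egirth) (u w : α) : (biadjMatrix G).col u ⬝ᵥ (biadjMatrix G).col w =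
      (if u = w then 1 else 0) + if G.bitGraph.Adj u w then 1 else 0 := by
  rw [← one_apply, ← adjMatrix_apply, ← Matrix.add_apply,
    ← transpose_biadjMatrix_mul_self hcheck hG, mul_apply']
  rfl

theorem col_dotProduct_col_biadjMatrix_of_isIndepSet
    (hcheck : ∀ u, #{c | G.Adj (inr c) (inl u)} = 3) (hG : 4 < G.egirth) {s : Set α}
    (hs : G.bitGraph.IsIndepSet s) {u w : α} (hu : u ∈ s) (hw : w ∈ s) :
    (biadjMatrix G).col u ⬝ᵥ (biadjMatrix G).col w = if u = w then 1 else 0 := by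
  have hnadj : ¬ G.bitGraph.Adj u w := fun h => hs hu hw h.ne h
  simp [col_dotProduct_col_biadjMatrix hcheck hG, hnadj]

theorem biadjMatrix_col_injective (hcheck : ∀ u, 2 ≤ #{c | G.Adj (inr c) (inl u)})
    (hG : 4 < G.egirth) : Function.Injective (biadjMatrix G).col := by
  intro a b hab
  by_contra hne
  have hsame : ∀ c, G.Adj (inr c) (inl a) ↔ G.Adj (inr c) (inl b) := fun c => by
    have := congrFun hab c
    simp only [col_apply, biadjMatrix, of_apply] at this
    split_ifs at this <;> simp_all
  have := card_common_le_one_of_four_lt_egirth hG hne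
  simp only [hsame, and_self] at this
  linarith [hcheck b]

theorem card_le_rank_biadjMatrix [Fintype α] (hcheck : ∀ u, #{c | G.Adj (inr c) (inl u)} = 3)
    (hG : 4 < G.egirth) {s : Finset α} (hs : G.bitGraph.IsIndepSet s) :
    #s ≤ (biadjMatrix G).rank :=
  (biadjMatrix G).card_le_rank_of_linearIndepOn_col <| linearIndepOn_of_orthonormalOn
    fun _ hi _ hj => col_dotProduct_col_biadjMatrix_of_isIndepSet hcheck hG hs hi hj

theorem card_add_one_le_rank_biadjMatrix [Fintype α]
    (hcheck : ∀ u, #{c | G.Adj (inr c) (inl u)} = 3) (hG : 4 < G.egirth) {s : Finset α}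
    (hs : G.bitGraph.IsIndepSet s) {a b : α} (ha : a ∈ s) (hb : b ∉ s)
    (hab : ∀ u ∈ s, G.bitGraph.Adj u b ↔ u = a) : #s + 1 ≤ (biadjMatrix G).rank := by
  rw [← card_insert_of_notMem hb]
  refine (biadjMatrix G).card_le_rank_of_linearIndepOn_col ?_
  rw [coe_insert]
  refine linearIndepOn_insert_of_orthonormalOn
    (fun _ hi _ hj => col_dotProduct_col_biadjMatrix_of_isIndepSet hcheck hG hs hi hj) ha hb
    (fun j hj => ?_) ((biadjMatrix_col_injective (by simp [hcheck]) hG).ne ?_)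
  · have hbj : b ≠ j := fun h => hb (h ▸ hj)
    simp [col_dotProduct_col_biadjMatrix hcheck hG, hbj, G.bitGraph.adj_comm b, hab j hj, eq_comm]
  · exact fun h => hb (h ▸ ha)

end BitGraph

end SimpleGraph

open SimpleGraph

theorem stmt_7_general (n : ℕ) (G : SimpleGraph (Fin n ⊕ Fin n))
    [DecidableRel G.Adj]
    (hconn : G.Connected)
    (hbip₁ : ∀ a b, ¬ G.Adj (Sum.inl a) (Sum.inl b))
    (hbip₂ : ∀ a b, ¬ G.Adj (Sum.inr a) (Sum.inr b))
    (hreg : ∀ v, (G.neighborSet v).ncard = 3)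
    (hgirth : 6 ≤ G.egirth)
    (H : Matrix (Fin n) (Fin n) (ZMod 2))
    (hH : ∀ c b, H c b = if G.Adj (Sum.inr c) (Sum.inl b) then 1 else 0) :
    6 * Module.finrank (ZMod 2) (LinearMap.ker (Matrix.mulVecLin H)) ≤ 5 * n := by
  obtain rfl : H = biadjMatrix G := Matrix.ext hH
  have hcheck (u : Fin n) : #{c | G.Adj (inr c) (inl u)} = 3 :=
    (ncard_neighborSet_inl hbip₁ u).symm.trans (hreg _)
  have hbit (c : Fin n) : #{u | G.Adj (inr c) (inl u)} = 3 :=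
    (ncard_neighborSet_inr hbip₂ c).symm.trans (hreg _)
  have hG : 4 < G.egirth := lt_of_lt_of_le (by norm_num) hgirth
  have hΓ : G.bitGraph.Connected := bitGraph_connected hconn hbip₁ hbip₂ fun c => by
    obtain ⟨u, hu⟩ := card_pos.1 ((hbit c).symm ▸ three_pos)
    exact ⟨u, (mem_filter.1 hu).2⟩
  have hdeg (u : Fin n) : G.bitGraph.degree u ≤ 3 * 2 :=
    degree_bitGraph_le (fun u => (hcheck u).le) (fun c => (hbit c).le) u
  have hrank : n ≤ 6 * (biadjMatrix G).rank := by
    obtain ⟨s, hs, hbig | ⟨a, ha, b, hb, hab, hcard⟩⟩ :=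
      hΓ.exists_isIndepSet_of_degree_le hdeg (by norm_num)
    · have := card_le_rank_biadjMatrix hcheck hG hs
      rw [Fintype.card_fin] at hbig
      omega
    · have := card_add_one_le_rank_biadjMatrix hcheck hG hs ha hb hab
      rw [Fintype.card_fin] at hcard
      omega
  have := (biadjMatrix G).rank_add_finrank_ker
  rw [Fintype.card_fin] at this
  omega

/-- The dimension of the code of a connected bipartite cubic graph with girth at least 6
and parts of size `n ≥ 7` is at most `5n/6`. -/
theorem stmt_7 (n : ℕ) (hn : 7 ≤ n) (G : SimpleGraph (Fin n ⊕ Fin n))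
    [DecidableRel G.Adj]
    (hconn : G.Connected)
    (hbip₁ : ∀ a b, ¬ G.Adj (Sum.inl a) (Sum.inl b))
    (hbip₂ : ∀ a b, ¬ G.Adj (Sum.inr a) (Sum.inr b))
    (hreg : ∀ v, (G.neighborSet v).ncard = 3)
    (hgirth : 6 ≤ G.egirth)
    (H : Matrix (Fin n) (Fin n) (ZMod 2))
    (hH : ∀ c b, H c b = if G.Adj (Sum.inr c) (Sum.inl b) then 1 else 0) :
    6 * Module.finrank (ZMod 2) (LinearMap.ker (Matrix.mulVecLin H)) ≤ 5 * n :=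
  stmt_7_general n G hconn hbip₁ hbip₂ hreg hgirth H hH
end

section
/- Let G be a connected bipartite cubic graph with girth at least 6 and biadjacency matrix H of size n×n over F₂. If S is an independent set of the bit node graph Γ, then the columns of H indexed by S are linearly independent over F₂, and hence rank₂(H) ≥ α(Γ), where α(Γ) is the independence number of Γ. -/
/-!
Over `F₂` the Gram matrix `HᵀH` is `I + T`, `T` the adjacency matrix of `Γ`: a bit node has
`3 ≡ 1` check neighbours, and two distinct bit nodes share a check exactly when they are adjacent
in `Γ`. So the columns indexed by an independent set `S` of `Γ` are orthonormal for the dot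
product, hence linearly independent, and `|S| ≤ rank H`.
-/

open Finset Matrix

theorem linearIndependent_of_dotProduct_eq_ite {R m ι : Type*} [CommRing R] [Fintype m]
    [DecidableEq ι] (v : ι → m → R) (hv : ∀ i j, v i ⬝ᵥ v j = if i = j then 1 else 0) :
    LinearIndependent R v := by
  rw [linearIndependent_iff']
  intro s g hg i hi
  simpa [dotProduct_sum, dotProduct_smul, hv, hi] using congrArg (v i ⬝ᵥ ·) hg

theorem Matrix.card_le_rank_of_linearIndependent_cols {R m n : Type*} [CommRing R]
    [Nontrivial R] [Fintype n] (A : Matrix m n R) (s : Finset n)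
    (hs : LinearIndependent R fun j : s => A.col j) : s.card ≤ A.rank := by
  rw [rank_eq_finrank_span_cols, ← Fintype.card_coe s, ← finrank_span_eq_card hs]
  have := Module.Finite.span_of_finite R (Set.finite_range A.col)
  exact Submodule.finrank_mono (Submodule.span_mono (Set.range_comp_subset_range _ _))

theorem SimpleGraph.neighborSet_inl_eq_image_inr {α β : Type*} {G : SimpleGraph (α ⊕ β)}
    (hbip : ∀ a b, ¬ G.Adj (Sum.inl a) (Sum.inl b)) (a : α) :
    G.neighborSet (Sum.inl a) = Sum.inr '' {b | G.Adj (Sum.inl a) (Sum.inr b)} := by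
  ext (b | b)
  · simpa using hbip a b
  · simp

section Tanner

variable {R α β : Type*} [Fintype β] {G : SimpleGraph (α ⊕ β)} [DecidableRel G.Adj]

theorem card_filter_adj_inl_eq_ncard (hbip : ∀ a b, ¬ G.Adj (Sum.inl a) (Sum.inl b)) (a : α) :
    #{c | G.Adj (Sum.inr c) (Sum.inl a)} = (G.neighborSet (Sum.inl a)).ncard := by
  rw [G.neighborSet_inl_eq_image_inr hbip, Set.ncard_image_of_injective _ Sum.inr_injective,
    ← Set.ncard_coe_finset]
  simp [G.adj_comm]

theorem col_dotProduct_col_eq_card [Semiring R] (H : Matrix β α R)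
    (hH : ∀ c a, H c a = if G.Adj (Sum.inr c) (Sum.inl a) then 1 else 0) (a a' : α) :
    H.col a ⬝ᵥ H.col a' =
      #{c | G.Adj (Sum.inr c) (Sum.inl a) ∧ G.Adj (Sum.inr c) (Sum.inl a')} := by
  rw [Finset.natCast_card_filter]
  simp only [dotProduct, col_apply, hH, ite_mul, one_mul, zero_mul, ite_and]

theorem col_dotProduct_col_eq_zero [Semiring R] (H : Matrix β α R)
    (hH : ∀ c a, H c a = if G.Adj (Sum.inr c) (Sum.inl a) then 1 else 0) {a a' : α}
    (hdisj : ∀ w, G.Adj (Sum.inl a) w → ¬ G.Adj (Sum.inl a') w) :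
    H.col a ⬝ᵥ H.col a' = 0 := by
  rw [col_dotProduct_col_eq_card H hH, Finset.card_eq_zero.mpr, Nat.cast_zero]
  exact Finset.filter_false_of_mem fun c _ ⟨hc, hc'⟩ => hdisj _ hc.symm hc'.symm

theorem col_dotProduct_col_self_eq_one (hbip : ∀ a b, ¬ G.Adj (Sum.inl a) (Sum.inl b))
    (H : Matrix β α (ZMod 2))
    (hH : ∀ c a, H c a = if G.Adj (Sum.inr c) (Sum.inl a) then 1 else 0) {a : α}
    (hdeg : (G.neighborSet (Sum.inl a)).ncard = 3) :
    H.col a ⬝ᵥ H.col a = 1 := by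
  rw [col_dotProduct_col_eq_card H hH]
  simp only [and_self, card_filter_adj_inl_eq_ncard hbip, hdeg]
  rfl

end Tanner

theorem stmt_8_general (n : ℕ) (G : SimpleGraph (Fin n ⊕ Fin n))
    [DecidableRel G.Adj]
    (hbip₁ : ∀ a b, ¬ G.Adj (Sum.inl a) (Sum.inl b))
    (hreg : ∀ v, (G.neighborSet v).ncard = 3)
    (H : Matrix (Fin n) (Fin n) (ZMod 2))
    (hH : ∀ c b, H c b = if G.Adj (Sum.inr c) (Sum.inl b) then 1 else 0)
    (Γ : SimpleGraph (Fin n))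
    (hΓ : ∀ u v, Γ.Adj u v ↔ u ≠ v ∧ ∃ w, G.Adj (Sum.inl u) w ∧ G.Adj (Sum.inl v) w) :
    (∀ S : Finset (Fin n), (∀ u ∈ S, ∀ v ∈ S, ¬ Γ.Adj u v) →
        LinearIndependent (ZMod 2) (fun j : S => fun i => H i (j : Fin n))) ∧
      sSup {k : ℕ | ∃ S : Finset (Fin n), S.card = k ∧ ∀ u ∈ S, ∀ v ∈ S, ¬ Γ.Adj u v} ≤
        H.rank := by
  have hindep : ∀ S : Finset (Fin n), (∀ u ∈ S, ∀ v ∈ S, ¬ Γ.Adj u v) →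
      LinearIndependent (ZMod 2) (fun j : S => H.col j) := by
    intro S hS
    refine linearIndependent_of_dotProduct_eq_ite _ fun u v => ?_
    obtain rfl | huv := eq_or_ne u v
    · rw [if_pos rfl]
      exact col_dotProduct_col_self_eq_one hbip₁ H hH (hreg _)
    · have hdisj := hS u u.2 v v.2
      simp only [hΓ, ne_eq, Subtype.coe_inj, huv, not_false_eq_true, true_and, not_exists,
        not_and] at hdisj
      rw [if_neg huv]
      exact col_dotProduct_col_eq_zero H hH hdisj
  refine ⟨hindep, csSup_le ⟨0, ∅, rfl, by simp⟩ ?_⟩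
  rintro k ⟨S, rfl, hS⟩
  exact H.card_le_rank_of_linearIndependent_cols S (hindep S hS)

/-- The columns of `H` indexed by an independent set of the bit node graph are linearly
independent over `F₂`; hence `rank₂(H) ≥ α(Γ)`. -/
theorem stmt_8 (n : ℕ) (G : SimpleGraph (Fin n ⊕ Fin n))
    [DecidableRel G.Adj]
    (hconn : G.Connected)
    (hbip₁ : ∀ a b, ¬ G.Adj (Sum.inl a) (Sum.inl b))
    (hbip₂ : ∀ a b, ¬ G.Adj (Sum.inr a) (Sum.inr b))
    (hreg : ∀ v, (G.neighborSet v).ncard = 3)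
    (hgirth : 6 ≤ G.egirth)
    (H : Matrix (Fin n) (Fin n) (ZMod 2))
    (hH : ∀ c b, H c b = if G.Adj (Sum.inr c) (Sum.inl b) then 1 else 0)
    (Γ : SimpleGraph (Fin n))
    (hΓ : ∀ u v, Γ.Adj u v ↔ u ≠ v ∧ ∃ w, G.Adj (Sum.inl u) w ∧ G.Adj (Sum.inl v) w) :
    (∀ S : Finset (Fin n), (∀ u ∈ S, ∀ v ∈ S, ¬ Γ.Adj u v) →
        LinearIndependent (ZMod 2) (fun j : S => fun i => H i (j : Fin n))) ∧
      sSup {k : ℕ | ∃ S : Finset (Fin n), S.card = k ∧ ∀ u ∈ S, ∀ v ∈ S, ¬ Γ.Adj u v} ≤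
        H.rank :=
  stmt_8_general n G hbip₁ hreg H hH Γ hΓ
end

section
/- Let G be a connected bipartite cubic vertex-transitive graph on 2^t vertices (t ≥ 2), with parts of size 2^{t-1}, and let H be its biadjacency matrix over F₂. Then the code C = ker H is the zero code, i.e., C has parameters [2^{t-1}, 0]; equivalently, H has full rank over F₂. -/
/-!
A Sylow `2`-subgroup `P` of `Aut G` still acts transitively on the `2 ^ t` vertices, because the
vertex stabilizers have `2`-power index. If the adjacency matrix `A` over `𝔽₂` had a nonzero
kernel, that kernel would be a nontrivial `2`-group on which `P` acts, so `P` would fix a nonzero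
kernel vector; by transitivity this vector is constant, and `A` maps the all-ones vector to
`3 • 1 ≠ 0`. A kernel vector `x` of the biadjacency matrix `H` extends by zero to a kernel vector of
`A`, so `H` is injective as well.
-/

open MulAction Matrix

theorem Sylow.isPretransitive_of_card_eq_prime_pow {Γ X : Type*} [Group Γ] [Finite Γ]
    [MulAction Γ X] [IsPretransitive Γ X] {p n : ℕ} [Fact p.Prime]
    (hX : Nat.card X = p ^ n) (P : Sylow p Γ) : IsPretransitive P X := by
  have : Finite X := Nat.finite_of_card_ne_zero (by simp [hX, (Fact.out : p.Prime).ne_zero])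
  refine ⟨fun x y => ?_⟩
  set S := stabilizer Γ x
  have hcop : (p ^ n).Coprime (P : Subgroup Γ).index :=
    Nat.Coprime.pow_left n ((Nat.Prime.coprime_iff_not_dvd Fact.out).mpr P.not_dvd_index)
  have hdvd : p ^ n ∣ S.relIndex P := by
    refine hcop.dvd_of_dvd_mul_right ?_
    rw [← S.inf_relIndex_right, Subgroup.relIndex_mul_index inf_le_right,
      ← hX, ← index_stabilizer_of_transitive Γ x]
    exact Subgroup.index_dvd_of_le inf_le_left
  have horbit : (orbit P x).ncard = S.relIndex P := by
    rw [← index_stabilizer]; rfl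
  have huniv : orbit P x = Set.univ := by
    refine Set.eq_of_subset_of_ncard_le (Set.subset_univ _) ?_
    rw [Set.ncard_univ, hX, horbit]
    exact Nat.le_of_dvd (horbit ▸ (Set.ncard_pos (Set.toFinite _)).mpr (nonempty_orbit x)) hdvd
  exact (huniv ▸ Set.mem_univ y : y ∈ orbit P x)

namespace Matrix

section

variable {V R : Type*} [Fintype V] [NonUnitalNonAssocSemiring R]

theorem mulVec_comp_smul {Γ : Type*} [Group Γ] [MulAction Γ V] {A : Matrix V V R}
    (hA : ∀ (g : Γ) u v, A (g • u) (g • v) = A u v) (g : Γ) (x : V → R) :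
    A *ᵥ (fun v => x (g • v)) = fun u => (A *ᵥ x) (g • u) := by
  ext u
  exact Fintype.sum_equiv (MulAction.toPerm g) _ _ fun v => by simp [hA]

theorem mulVec_sumElim_zero {α β γ δ : Type*} [Fintype γ] [Fintype δ]
    {M : Matrix (α ⊕ β) (γ ⊕ δ) R} (h : M.submatrix Sum.inl Sum.inl = 0) (x : γ → R) :
    M *ᵥ Sum.elim x (0 : δ → R) = Sum.elim (0 : α → R) (M.submatrix Sum.inr Sum.inl *ᵥ x) := by
  ext (i | i)
  · have hi : ∀ j, M (.inl i) (.inl j) = 0 := congrFun₂ h i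
    simp [mulVec, dotProduct, Fintype.sum_sum_type, hi]
  · simp [mulVec, dotProduct, Fintype.sum_sum_type]

end

section

attribute [local instance] arrowAction

theorem ker_mulVecLin_eq_bot_of_isPretransitive {Γ V : Type*} [Group Γ] [Finite Γ]
    [MulAction Γ V] [IsPretransitive Γ V] [Fintype V] {p n : ℕ} [Fact p.Prime]
    (hV : Nat.card V = p ^ n) {A : Matrix V V (ZMod p)}
    (hA : ∀ (g : Γ) u v, A (g • u) (g • v) = A u v) (hA1 : A *ᵥ 1 ≠ 0) :
    LinearMap.ker A.mulVecLin = ⊥ := by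
  by_contra hne
  let K : SubMulAction Γ (V → ZMod p) :=
    { carrier := LinearMap.ker A.mulVecLin
      smul_mem' := fun g x hx => by
        simp only [SetLike.mem_coe, LinearMap.mem_ker, mulVecLin_apply] at hx ⊢
        rw [show g • x = fun v => x (g⁻¹ • v) from rfl, A.mulVec_comp_smul hA, hx]
        rfl }
  have hpK : p ∣ Nat.card K := by
    change p ∣ Nat.card (LinearMap.ker A.mulVecLin)
    rw [Module.natCard_eq_pow_finrank (K := ZMod p), Nat.card_zmod]
    exact dvd_pow_self p (Submodule.finrank_eq_zero.not.mpr hne)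
  obtain P : Sylow p Γ := default
  have := Sylow.isPretransitive_of_card_eq_prime_pow hV P
  obtain ⟨⟨b, hbK⟩, hb, hb0⟩ := P.isPGroup'.exists_fixed_point_of_prime_dvd_card_of_fixed_point
    K hpK (a := ⟨0, Submodule.zero_mem _⟩) fun _ => rfl
  have hconst : ∀ u v, b u = b v := fun u v => by
    obtain ⟨σ, rfl⟩ := exists_smul_eq P u v
    have h : b ((σ : Γ)⁻¹ • σ • u) = b (σ • u) := congrFun (congrArg Subtype.val (hb σ)) _
    rwa [Subgroup.smul_def, inv_smul_smul] at h
  obtain ⟨v₀, hv₀⟩ : ∃ v₀, b v₀ ≠ 0 :=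
    Function.ne_iff.mp fun h => hb0 (Subtype.ext h.symm)
  have hAb : A *ᵥ b = 0 := hbK
  rw [show b = b v₀ • 1 from funext fun v => by simp [hconst v v₀], mulVec_smul] at hAb
  exact (smul_eq_zero.mp hAb).elim hv₀ hA1

end

end Matrix

theorem SimpleGraph.ker_adjMatrix_mulVecLin_eq_bot {V : Type*} [Fintype V] (G : SimpleGraph V)
    [DecidableRel G.Adj] {p n k : ℕ} [Fact p.Prime] (hV : Nat.card V = p ^ n)
    (hreg : G.IsRegularOfDegree k) (hk : ¬ p ∣ k) (htrans : ∀ u v, ∃ e : G ≃g G, e u = v) :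
    LinearMap.ker (G.adjMatrix (ZMod p)).mulVecLin = ⊥ := by
  have : Finite (G ≃g G) := Finite.of_injective _ RelIso.toEquiv_injective
  have : IsPretransitive (G ≃g G) V := ⟨htrans⟩
  obtain ⟨v₀⟩ : Nonempty V := Nat.card_pos_iff.mp (hV ▸ pow_pos (Fact.out : p.Prime).pos n) |>.1
  refine ker_mulVecLin_eq_bot_of_isPretransitive (Γ := G ≃g G) hV
    (fun e u v => by simp [adjMatrix_apply, Iso.map_adj_iff]) fun h => hk ?_
  rw [← ZMod.natCast_eq_zero_iff]
  simpa [hreg.degree_eq] using congrFun h v₀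

theorem stmt_10_general (t : ℕ)
    (G : SimpleGraph (Fin (2 ^ (t - 1)) ⊕ Fin (2 ^ (t - 1))))
    [DecidableRel G.Adj]
    (hbip₁ : ∀ a b, ¬ G.Adj (Sum.inl a) (Sum.inl b))
    (hreg : ∀ v, (G.neighborSet v).ncard = 3)
    (htrans : ∀ u v, ∃ e : G ≃g G, e u = v)
    (H : Matrix (Fin (2 ^ (t - 1))) (Fin (2 ^ (t - 1))) (ZMod 2))
    (hH : ∀ c b, H c b = if G.Adj (Sum.inr c) (Sum.inl b) then 1 else 0) :
    LinearMap.ker (Matrix.mulVecLin H) = ⊥ := by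
  have hcard : Nat.card (Fin (2 ^ (t - 1)) ⊕ Fin (2 ^ (t - 1))) = 2 ^ (t - 1 + 1) := by
    simp [pow_succ, mul_two]
  have hcubic : G.IsRegularOfDegree 3 := fun v => by
    rw [← hreg v, ← SimpleGraph.card_neighborSet_eq_degree, ← Nat.card_eq_fintype_card,
      Nat.card_coe_set_eq]
  have hA := G.ker_adjMatrix_mulVecLin_eq_bot hcard hcubic (by decide) htrans
  have hH_submatrix : H = (G.adjMatrix (ZMod 2)).submatrix Sum.inr Sum.inl := by
    ext c b; simp [hH, SimpleGraph.adjMatrix_apply]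
  have hA_inl_inl : (G.adjMatrix (ZMod 2)).submatrix Sum.inl Sum.inl = 0 := by
    ext a b; simp [SimpleGraph.adjMatrix_apply, hbip₁]
  rw [LinearMap.ker_eq_bot'] at hA ⊢
  intro x hx
  have hx0 := hA (Sum.elim x 0) (by
    rw [mulVecLin_apply, mulVec_sumElim_zero hA_inl_inl, ← hH_submatrix, ← mulVecLin_apply, hx]
    exact Sum.elim_zero_zero)
  exact funext fun b => congrFun hx0 (Sum.inl b)

/-- For a connected bipartite cubic vertex-transitive graph on `2^t` vertices, the code
with parity-check matrix the biadjacency matrix `H` is the zero code. -/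
theorem stmt_10 (t : ℕ) (ht : 2 ≤ t)
    (G : SimpleGraph (Fin (2 ^ (t - 1)) ⊕ Fin (2 ^ (t - 1))))
    [DecidableRel G.Adj]
    (hconn : G.Connected)
    (hbip₁ : ∀ a b, ¬ G.Adj (Sum.inl a) (Sum.inl b))
    (hbip₂ : ∀ a b, ¬ G.Adj (Sum.inr a) (Sum.inr b))
    (hreg : ∀ v, (G.neighborSet v).ncard = 3)
    (htrans : ∀ u v, ∃ e : G ≃g G, e u = v)
    (H : Matrix (Fin (2 ^ (t - 1))) (Fin (2 ^ (t - 1))) (ZMod 2))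
    (hH : ∀ c b, H c b = if G.Adj (Sum.inr c) (Sum.inl b) then 1 else 0) :
    LinearMap.ker (Matrix.mulVecLin H) = ⊥ :=
  stmt_10_general t G hbip₁ hreg htrans H hH
end
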